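/- Let N ≥ 1 be an integer, Δx = 1/N, Δt > 0, and let uⁿ and uⁿ⁺¹ be periodic grid functions related by the fully-discrete semi-implicit scheme uⁿ⁺¹_j = ūⁿ_j − Δt ūⁿ_j (D₀uⁿ)_j − Δt (D₋D₊²uⁿ⁺¹)_j + Δt (D₊³D₋²uⁿ⁺¹)_j for all j, where ūⁿ_j = (uⁿ_{j+1} + uⁿ_{j−1})/2. If the CFL condition (Δt/Δx)·M·(1 + 24(Δt/Δx)·M) ≤ 3/2 holds with M = max_{1 ≤ j ≤ N} |uⁿ_j|, then ‖uⁿ⁺¹‖_h² + Δt·Δx·( ‖D₋D₊²uⁿ⁺¹‖_h² + ‖D₊D₋uⁿ⁺¹‖_h² ) + (Δx²/8)‖D₀uⁿ‖_h² ≤ ‖uⁿ‖_h². -/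

import Mathlib

/-! Energy method. Multiplying the scheme by `uⁿ⁺¹` and summing by parts over a period, the two
implicit terms contribute exactly `Δt Δx / 2 (‖D₊D₋uⁿ⁺¹‖² + ‖D₋D₊²uⁿ⁺¹‖²)` (up to index shifts),
and Young's inequality reduces the claim to `‖ūⁿ − Δt ūⁿ D₀uⁿ‖² ≤ ‖uⁿ‖² − Δx²/8 ‖D₀uⁿ‖²`. For that,
`‖ū‖² = ‖u‖² − Δx² ‖D₀u‖²`, the cross term `Σ ū² D₀u = −Δx²/3 Σ (D₀u)³` telescopes into a cubic,
and the CFL condition, through `Δt M ≤ Δx / 4`, makes the cubic and the quadratic remainder a small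
fraction of `Δx² ‖D₀u‖²`. -/

/-- Forward difference operator `(D₊u)_i = (u_{i+1} − u_i)/h`. -/
noncomputable def Dp (h : ℝ) (u : ℤ → ℝ) : ℤ → ℝ := fun i => (u (i + 1) - u i) / h

/-- Backward difference operator `(D₋u)_i = (u_i − u_{i−1})/h`. -/
noncomputable def Dm (h : ℝ) (u : ℤ → ℝ) : ℤ → ℝ := fun i => (u i - u (i - 1)) / h

/-- Central difference operator `(D₀u)_i = (u_{i+1} − u_{i−1})/(2h)`. -/
noncomputable def D0 (h : ℝ) (u : ℤ → ℝ) : ℤ → ℝ := fun i => (u (i + 1) - u (i - 1)) / (2 * h)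

/-- Discrete inner product `(f,g)_h = h Σ_{i=1}^N f_i g_i`. -/
noncomputable def iph (N : ℕ) (h : ℝ) (f g : ℤ → ℝ) : ℝ :=
  h * ∑ i ∈ Finset.Icc (1 : ℤ) (N : ℤ), f i * g i

/-- Discrete squared norm `‖f‖_h² = h Σ_{i=1}^N f_i²`. -/
noncomputable def nh2 (N : ℕ) (h : ℝ) (f : ℤ → ℝ) : ℝ :=
  h * ∑ i ∈ Finset.Icc (1 : ℤ) (N : ℤ), (f i) ^ 2

/-- Discrete norm `‖f‖_h`. -/
noncomputable def normh (N : ℕ) (h : ℝ) (f : ℤ → ℝ) : ℝ := Real.sqrt (nh2 N h f)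

/-- A periodic grid function with period `N`: `u_{i+N} = u_i` for all `i`. -/
def PeriodicGrid (N : ℕ) (u : ℤ → ℝ) : Prop := ∀ i : ℤ, u (i + N) = u i

open Finset Function

theorem Function.Periodic.sum_Icc_comp_add_one {M : Type*} [AddCancelCommMonoid M] {N : ℕ}
    {f : ℤ → M} (hf : Periodic f N) :
    ∑ i ∈ Icc 1 (N : ℤ), f (i + 1) = ∑ i ∈ Icc 1 (N : ℤ), f i := by
  apply add_left_cancel (a := f 1)
  calc f 1 + ∑ i ∈ Icc 1 (N : ℤ), f (i + 1) = f 1 + ∑ i ∈ Icc (1 + 1) ((N : ℤ) + 1), f i := by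
        rw [← map_add_right_Icc, sum_map]
        rfl
    _ = f 1 + ∑ i ∈ Icc 1 (N : ℤ), f i := by
        rw [← sum_insert (by simp), insert_Icc_add_one_left_eq_Icc (by omega),
          ← insert_Icc_right_eq_Icc_add_one (by omega), sum_insert (by simp), add_comm _ 1, hf]

theorem Function.Periodic.sum_Icc_comp_add {M : Type*} [AddCancelCommMonoid M] {N : ℕ}
    {f : ℤ → M} (hf : Periodic f N) (k : ℤ) :
    ∑ i ∈ Icc 1 (N : ℤ), f (i + k) = ∑ i ∈ Icc 1 (N : ℤ), f i := by
  induction k using Int.induction_on with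
  | zero => simp
  | succ k ih =>
    rw [← ih, ← (hf.add_const (k : ℤ)).sum_Icc_comp_add_one]
    simp only [add_assoc, add_comm (1 : ℤ)]
  | pred k ih =>
    rw [← ih, ← (hf.add_const _).sum_Icc_comp_add_one]
    simp only [add_assoc, add_sub_cancel]

theorem Function.Periodic.sum_Icc_sub_comp_add_one {M : Type*} [AddCommGroup M] {N : ℕ}
    {f : ℤ → M} (hf : Periodic f N) :
    ∑ i ∈ Icc 1 (N : ℤ), (f (i + 1) - f i) = 0 := by
  rw [sum_sub_distrib, hf.sum_Icc_comp_add_one, sub_self]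

theorem Function.Periodic.le_sup'_Icc {α : Type*} [LinearOrder α] {N : ℕ} {f : ℤ → α}
    (hf : Periodic f N) (hne : (Icc 1 (N : ℤ)).Nonempty) (j : ℤ) :
    f j ≤ (Icc 1 (N : ℤ)).sup' hne f := by
  have hN : (0 : ℤ) < N := by have := nonempty_Icc.mp hne; omega
  obtain ⟨k, ⟨hk0, hkN⟩, hjk⟩ := hf.exists_mem_Ioc hN j 0
  rw [hjk]
  exact le_sup' f (mem_Icc.mpr ⟨hk0, by simpa using hkN⟩)

namespace PeriodicGrid

variable {N : ℕ} {u : ℤ → ℝ}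

theorem dp (hu : PeriodicGrid N u) (h : ℝ) : PeriodicGrid N (Dp h u) := fun i => by
  simp only [Dp, add_right_comm i (N : ℤ), hu (i + 1), hu i]

theorem dm (hu : PeriodicGrid N u) (h : ℝ) : PeriodicGrid N (Dm h u) := fun i => by
  simp only [Dm, add_sub_right_comm i (N : ℤ), hu i, hu (i - 1)]

theorem sum_Icc_pow_comp_add (hu : PeriodicGrid N u) (n : ℕ) (k : ℤ) :
    ∑ i ∈ Icc 1 (N : ℤ), u (i + k) ^ n = ∑ i ∈ Icc 1 (N : ℤ), u i ^ n :=
  Periodic.sum_Icc_comp_add (f := fun i => u i ^ n) (fun i => by simp only [hu i]) k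

end PeriodicGrid

section InnerProduct

variable {N : ℕ} {h : ℝ} {f g w : ℤ → ℝ}

theorem iph_comm (f g : ℤ → ℝ) : iph N h f g = iph N h g f := by
  simp only [iph, mul_comm (f _)]

theorem two_mul_iph_le (hh : 0 ≤ h) (f g : ℤ → ℝ) :
    2 * iph N h f g ≤ nh2 N h f + nh2 N h g := by
  simp only [iph, nh2, mul_sum, ← sum_add_distrib]
  exact sum_le_sum fun i _ => by
    nlinarith [mul_le_mul_of_nonneg_left (two_mul_le_add_sq (f i) (g i)) hh]

theorem nh2_comp_add (hf : PeriodicGrid N f) (k : ℤ) :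
    nh2 N h (fun i => f (i + k)) = nh2 N h f := by
  simp only [nh2, hf.sum_Icc_pow_comp_add]

theorem iph_dp_left (hf : PeriodicGrid N f) (hg : PeriodicGrid N g) :
    iph N h (Dp h f) g = -iph N h f (Dm h g) := by
  have hF : Periodic (fun i => f i * g (i - 1) / h) N := fun i => by
    simp only [hf i, add_sub_right_comm i (N : ℤ), hg (i - 1)]
  have key : ∑ i ∈ Icc 1 (N : ℤ), (Dp h f i * g i + f i * Dm h g i) = 0 := by
    rw [← hF.sum_Icc_sub_comp_add_one]
    exact sum_congr rfl fun i _ => by simp only [Dp, Dm, add_sub_cancel_right]; ring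
  rw [eq_neg_iff_add_eq_zero, iph, iph, ← mul_add, ← sum_add_distrib, key, mul_zero]

theorem iph_dm_left (hf : PeriodicGrid N f) (hg : PeriodicGrid N g) :
    iph N h (Dm h f) g = -iph N h f (Dp h g) := by
  rw [iph_comm, iph_comm f, iph_dp_left hg hf, neg_neg]

theorem iph_dp_self (hw : PeriodicGrid N w) (hh : h ≠ 0) :
    iph N h (Dp h w) w = -(h / 2) * nh2 N h (Dp h w) := by
  have hF : Periodic (fun i => w i ^ 2 / (2 * h)) N := fun i => by simp only [hw i]
  have key : ∑ i ∈ Icc 1 (N : ℤ), (Dp h w i * w i + h / 2 * Dp h w i ^ 2) = 0 := by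
    rw [← hF.sum_Icc_sub_comp_add_one]
    exact sum_congr rfl fun i _ => by simp only [Dp]; field_simp; ring
  rw [sum_add_distrib, ← mul_sum] at key
  simp only [iph, nh2]
  linear_combination h * key

theorem iph_dm_self (hw : PeriodicGrid N w) (hh : h ≠ 0) :
    iph N h (Dm h w) w = h / 2 * nh2 N h (Dm h w) := by
  have hF : Periodic (fun i => w (i - 1) ^ 2 / (2 * h)) N := fun i => by
    simp only [add_sub_right_comm i (N : ℤ), hw (i - 1)]
  have key : ∑ i ∈ Icc 1 (N : ℤ), (Dm h w i * w i - h / 2 * Dm h w i ^ 2) = 0 := by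
    rw [← hF.sum_Icc_sub_comp_add_one]
    exact sum_congr rfl fun i _ => by simp only [Dm, add_sub_cancel_right]; field_simp; ring
  rw [sum_sub_distrib, ← mul_sum] at key
  simp only [iph, nh2]
  linear_combination h * key

theorem iph_dm_dp_dp_self (hw : PeriodicGrid N w) (hh : h ≠ 0) :
    iph N h (Dm h (Dp h (Dp h w))) w = h / 2 * nh2 N h (Dp h (Dm h w)) := by
  have hshift : Dp h (Dp h w) = fun i => Dp h (Dm h w) (i + 1) := by
    funext i; simp only [Dp, Dm]; ring_nf
  rw [iph_dm_left (hw.dp h |>.dp h) hw, iph_dp_self (hw.dp h) hh, hshift,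
    nh2_comp_add (hw.dm h |>.dp h)]
  ring

theorem iph_dp_dp_dp_dm_dm_self (hw : PeriodicGrid N w) (hh : h ≠ 0) :
    iph N h (Dp h (Dp h (Dp h (Dm h (Dm h w))))) w = -(h / 2) * nh2 N h (Dm h (Dp h (Dp h w))) := by
  have hz := hw.dm h |>.dm h
  have hshift : Dm h (Dp h (Dp h w)) = fun i => Dm h (Dm h (Dm h w)) (i + 2) := by
    funext i; simp only [Dp, Dm]; ring_nf
  rw [iph_dp_left (hz.dp h |>.dp h) hw, iph_dp_left (hz.dp h) (hw.dm h),
    iph_dp_left hz (hw.dm h |>.dm h), iph_comm, iph_dm_self hz hh, hshift, nh2_comp_add (hz.dm h)]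
  ring

end InnerProduct

noncomputable def neighborAvg (u : ℤ → ℝ) (j : ℤ) : ℝ := (u (j + 1) + u (j - 1)) / 2

noncomputable def explicitStep (Δt h : ℝ) (u : ℤ → ℝ) (j : ℤ) : ℝ :=
  neighborAvg u j - Δt * neighborAvg u j * D0 h u j

section ExplicitStep

variable {N : ℕ} {h : ℝ} {u : ℤ → ℝ}

theorem sum_neighborAvg_sq (hu : PeriodicGrid N u) (hh : h ≠ 0) :
    ∑ i ∈ Icc 1 (N : ℤ), neighborAvg u i ^ 2
      = ∑ i ∈ Icc 1 (N : ℤ), u i ^ 2 - h ^ 2 * ∑ i ∈ Icc 1 (N : ℤ), D0 h u i ^ 2 := by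
  calc ∑ i ∈ Icc 1 (N : ℤ), neighborAvg u i ^ 2
      = ∑ i ∈ Icc 1 (N : ℤ), ((u (i + 1) ^ 2 + u (i + -1) ^ 2) / 2 - h ^ 2 * D0 h u i ^ 2) :=
        sum_congr rfl fun i _ => by
          simp only [neighborAvg, D0, ← sub_eq_add_neg]; field_simp; ring
    _ = _ := by
        rw [sum_sub_distrib, ← sum_div, sum_add_distrib, hu.sum_Icc_pow_comp_add,
          hu.sum_Icc_pow_comp_add, mul_sum]
        ring

theorem sum_neighborAvg_sq_mul_d0 (hu : PeriodicGrid N u) (hh : h ≠ 0) :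
    ∑ i ∈ Icc 1 (N : ℤ), neighborAvg u i ^ 2 * D0 h u i
      = -(h ^ 2 / 3) * ∑ i ∈ Icc 1 (N : ℤ), D0 h u i ^ 3 := by
  calc ∑ i ∈ Icc 1 (N : ℤ), neighborAvg u i ^ 2 * D0 h u i
      = ∑ i ∈ Icc 1 (N : ℤ),
          ((u (i + 1) ^ 3 - u (i + -1) ^ 3) / (6 * h) - h ^ 2 / 3 * D0 h u i ^ 3) :=
        sum_congr rfl fun i _ => by
          simp only [neighborAvg, D0, ← sub_eq_add_neg]; field_simp; ring
    _ = _ := by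
        rw [sum_sub_distrib, ← sum_div, sum_sub_distrib, hu.sum_Icc_pow_comp_add,
          hu.sum_Icc_pow_comp_add, sub_self, zero_div, ← mul_sum]
        ring

theorem mul_d0_le (hh : 0 < h) {M : ℝ} (hM : ∀ j, |u j| ≤ M) (i : ℤ) : h * D0 h u i ≤ M := by
  have h₁ := abs_le.mp (hM (i + 1))
  have h₂ := abs_le.mp (hM (i - 1))
  rw [D0, mul_div_assoc', div_le_iff₀ (by positivity)]
  nlinarith

theorem neighborAvg_sq_le {M : ℝ} (hM : ∀ j, |u j| ≤ M) (i : ℤ) : neighborAvg u i ^ 2 ≤ M ^ 2 := by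
  have h₁ := abs_le.mp (hM (i + 1))
  have h₂ := abs_le.mp (hM (i - 1))
  exact sq_le_sq' (by rw [neighborAvg]; linarith) (by rw [neighborAvg]; linarith)

theorem explicitStep_remainder_le {Δt M : ℝ} (hh : 0 < h) (hΔt : 0 ≤ Δt)
    (hM : ∀ j, |u j| ≤ M) (hcfl : Δt * M ≤ h / 4) (i : ℤ) :
    2 * Δt * h ^ 2 / 3 * D0 h u i ^ 3 + Δt ^ 2 * (neighborAvg u i ^ 2 * D0 h u i ^ 2)
      ≤ 7 / 8 * (h ^ 2 * D0 h u i ^ 2) := by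
  have hM0 : 0 ≤ M := (abs_nonneg _).trans (hM 0)
  have hcubic : Δt * (h * D0 h u i) ≤ h / 4 :=
    (mul_le_mul_of_nonneg_left (mul_d0_le hh hM i) hΔt).trans hcfl
  have hquad : Δt ^ 2 * neighborAvg u i ^ 2 ≤ (h / 4) ^ 2 :=
    calc Δt ^ 2 * neighborAvg u i ^ 2 ≤ (Δt * M) ^ 2 := by
          rw [mul_pow]; exact mul_le_mul_of_nonneg_left (neighborAvg_sq_le hM i) (sq_nonneg _)
      _ ≤ (h / 4) ^ 2 := pow_le_pow_left₀ (by positivity) hcfl 2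
  nlinarith [mul_le_mul_of_nonneg_left hcubic (by positivity : 0 ≤ 2 / 3 * h * D0 h u i ^ 2),
    mul_le_mul_of_nonneg_right hquad (sq_nonneg (D0 h u i))]

theorem nh2_explicitStep_le {Δt M : ℝ} (hu : PeriodicGrid N u) (hh : 0 < h) (hΔt : 0 ≤ Δt)
    (hM : ∀ j, |u j| ≤ M) (hcfl : Δt * M ≤ h / 4) :
    nh2 N h (explicitStep Δt h u) ≤ nh2 N h u - h ^ 2 / 8 * nh2 N h (D0 h u) := by
  have hsum : ∑ i ∈ Icc 1 (N : ℤ), explicitStep Δt h u i ^ 2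
      ≤ ∑ i ∈ Icc 1 (N : ℤ), u i ^ 2 - 1 / 8 * (h ^ 2 * ∑ i ∈ Icc 1 (N : ℤ), D0 h u i ^ 2) := by
    have hexpand : ∑ i ∈ Icc 1 (N : ℤ), explicitStep Δt h u i ^ 2
        = ∑ i ∈ Icc 1 (N : ℤ), neighborAvg u i ^ 2
          - 2 * Δt * ∑ i ∈ Icc 1 (N : ℤ), neighborAvg u i ^ 2 * D0 h u i
          + Δt ^ 2 * ∑ i ∈ Icc 1 (N : ℤ), neighborAvg u i ^ 2 * D0 h u i ^ 2 := by
      simp only [mul_sum, ← sum_sub_distrib, ← sum_add_distrib]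
      exact sum_congr rfl fun i _ => by rw [explicitStep]; ring
    have := sum_le_sum fun i (_ : i ∈ Icc 1 (N : ℤ)) => explicitStep_remainder_le hh hΔt hM hcfl i
    rw [sum_add_distrib, ← mul_sum, ← mul_sum, ← mul_sum, ← mul_sum] at this
    rw [hexpand, sum_neighborAvg_sq hu hh.ne', sum_neighborAvg_sq_mul_d0 hu hh.ne']
    linarith
  simp only [nh2]
  linarith [mul_le_mul_of_nonneg_left hsum hh.le]

end ExplicitStep

theorem mul_le_div_four_of_cfl {Δt h M : ℝ} (hh : 0 < h) (hΔt : 0 ≤ Δt) (hM : 0 ≤ M)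
    (hcfl : Δt / h * M * (1 + 24 * (Δt / h) * M) ≤ 3 / 2) : Δt * M ≤ h / 4 := by
  have hx : 0 ≤ Δt / h * M := by positivity
  have : Δt / h * M ≤ 1 / 4 := by nlinarith
  calc Δt * M = Δt / h * M * h := by field_simp
    _ ≤ 1 / 4 * h := mul_le_mul_of_nonneg_right this hh.le
    _ = h / 4 := by ring

/-- Paper's Lemma 3.2, estimate (3.6): discrete `L²` stability of the fully-discrete
semi-implicit scheme
`uⁿ⁺¹_j = ūⁿ_j − Δt ūⁿ_j (D₀uⁿ)_j − Δt (D₋D₊²uⁿ⁺¹)_j + Δt (D₊³D₋²uⁿ⁺¹)_j`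
(with `ūⁿ_j = (uⁿ_{j+1}+uⁿ_{j−1})/2`) under the CFL condition
`(Δt/Δx) M (1 + 24 (Δt/Δx) M) ≤ 3/2`, `M = max_{1≤j≤N} |uⁿ_j|`:
`‖uⁿ⁺¹‖_h² + Δt Δx (‖D₋D₊²uⁿ⁺¹‖_h² + ‖D₊D₋uⁿ⁺¹‖_h²) + (Δx²/8) ‖D₀uⁿ‖_h² ≤ ‖uⁿ‖_h²`. -/
theorem fully_discrete_L2_stability (N : ℕ) (hN : 1 ≤ N) (Δx Δt : ℝ)
    (hΔx : Δx = 1 / N) (hΔt : 0 < Δt)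
    (un unp : ℤ → ℝ) (hun : PeriodicGrid N un) (hunp : PeriodicGrid N unp)
    (hscheme : ∀ j : ℤ, unp j = (un (j + 1) + un (j - 1)) / 2
        - Δt * ((un (j + 1) + un (j - 1)) / 2) * D0 Δx un j
        - Δt * Dm Δx (Dp Δx (Dp Δx unp)) j
        + Δt * Dp Δx (Dp Δx (Dp Δx (Dm Δx (Dm Δx unp)))) j)
    (M : ℝ)
    (hM : M = (Finset.Icc (1 : ℤ) (N : ℤ)).sup'
        (Finset.nonempty_Icc.mpr (by exact_mod_cast hN)) (fun j => |un j|))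
    (hcfl : (Δt / Δx) * M * (1 + 24 * (Δt / Δx) * M) ≤ 3 / 2) :
    nh2 N Δx unp
        + Δt * Δx * (nh2 N Δx (Dm Δx (Dp Δx (Dp Δx unp))) + nh2 N Δx (Dp Δx (Dm Δx unp)))
        + (Δx ^ 2 / 8) * nh2 N Δx (D0 Δx un)
      ≤ nh2 N Δx un := by
  have hh : 0 < Δx := by rw [hΔx]; exact one_div_pos.mpr (by exact_mod_cast hN)
  have hbound : ∀ j, |un j| ≤ M := fun j => by
    rw [hM]
    exact Periodic.le_sup'_Icc (f := fun j => |un j|) (fun i => by simp only [hun i]) _ j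
  have hstep := nh2_explicitStep_le hun hh hΔt.le hbound
    (mul_le_div_four_of_cfl hh hΔt.le ((abs_nonneg _).trans (hbound 0)) hcfl)
  have henergy : nh2 N Δx unp = iph N Δx (explicitStep Δt Δx un) unp
      - Δt * iph N Δx (Dm Δx (Dp Δx (Dp Δx unp))) unp
      + Δt * iph N Δx (Dp Δx (Dp Δx (Dp Δx (Dm Δx (Dm Δx unp))))) unp := by
    simp only [nh2, iph, mul_sum, ← sum_sub_distrib, ← sum_add_distrib]
    exact sum_congr rfl fun j _ => by
      simp only [explicitStep, neighborAvg]; linear_combination Δx * unp j * hscheme j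
  rw [iph_dm_dp_dp_self hunp hh.ne', iph_dp_dp_dp_dm_dm_self hunp hh.ne'] at henergy
  linarith [two_mul_iph_le hh.le (N := N) (explicitStep Δt Δx un) unp]
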